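/- arXiv:math/0606286 — 3 statements merged into one kernel-verified Lean document; each statement's English description precedes it below -/
import Mathlib

section
/- The sequence defined by φ_{2n} = φ_{2n+1} = ∏_{j=1}^n (1 + 1/(2j-1)) (with φ_0 = φ_1 = 1) solves the discrete Schrödinger equation u(n+1) + u(n-1) + ((-1)^n/n) u(n) = 2 u(n) for all n ≥ 1. -/
/-! The partial products `P k = ∏_{j=1}^k (1 + 1/(2j-1))` satisfy `P (k+1) = P k (1 + 1/(2k+1))`.
Since `φ` repeats each `P k` twice, at odd `n = 2m+1` the equation is this recurrence at `m`, and at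
even `n = 2k+2` it is the same recurrence read backwards, `P k = P (k+1) (1 - 1/(2k+2))`. -/

lemma prod_Icc_one_add_inv_two_mul_sub_one_succ (k : ℕ) :
    ∏ j ∈ Finset.Icc 1 (k + 1), (1 + 1 / (2 * (j : ℝ) - 1))
      = (∏ j ∈ Finset.Icc 1 k, (1 + 1 / (2 * (j : ℝ) - 1))) * (1 + 1 / (2 * (k : ℝ) + 1)) := by
  rw [Finset.prod_Icc_succ_top (by omega)]
  push_cast
  ring_nf

section Recurrence

variable {P : ℕ → ℝ} (hP : ∀ k : ℕ, P (k + 1) = P k * (1 + 1 / (2 * (k : ℝ) + 1)))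
include hP

lemma schrodinger_even_of_recurrence (k : ℕ) :
    P (k + 1) + P k + (1 / (2 * ((k : ℝ) + 1))) * P (k + 1) = 2 * P (k + 1) := by
  rw [hP]
  field_simp
  ring

lemma schrodinger_odd_of_recurrence (m : ℕ) :
    P (m + 1) + P m + (-1 / (2 * (m : ℝ) + 1)) * P m = 2 * P m := by
  rw [hP]
  field_simp
  ring

end Recurrence

/-- The sequence `φ` with `φ (2n) = φ (2n+1) = ∏_{j=1}^n (1 + 1/(2j-1))` solves the
discrete Schrödinger equation `u(n+1) + u(n-1) + ((-1)^n/n) u(n) = 2 u(n)` for `n ≥ 1`. -/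
theorem stmt0 (φ : ℕ → ℝ)
    (hφeven : ∀ n : ℕ, φ (2*n) = ∏ j ∈ Finset.Icc 1 n, (1 + 1/(2*(j:ℝ) - 1)))
    (hφodd : ∀ n : ℕ, φ (2*n+1) = ∏ j ∈ Finset.Icc 1 n, (1 + 1/(2*(j:ℝ) - 1))) :
    ∀ n : ℕ, 1 ≤ n → φ (n+1) + φ (n-1) + ((-1)^n/(n:ℝ)) * φ n = 2 * φ n := by
  intro n hn
  let P (k : ℕ) : ℝ := ∏ j ∈ Finset.Icc 1 k, (1 + 1 / (2 * (j : ℝ) - 1))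
  have hP (k : ℕ) : P (k + 1) = P k * (1 + 1 / (2 * (k : ℝ) + 1)) :=
    prod_Icc_one_add_inv_two_mul_sub_one_succ k
  obtain ⟨m, rfl | rfl⟩ := Nat.even_or_odd' n
  · obtain ⟨k, rfl⟩ : ∃ k, m = k + 1 := ⟨m - 1, by omega⟩
    rw [show 2 * (k + 1) - 1 = 2 * k + 1 by omega, hφodd, hφodd, hφeven, pow_mul]
    convert schrodinger_even_of_recurrence hP k using 3
    norm_num
  · rw [show 2 * m + 1 + 1 = 2 * (m + 1) by ring, Nat.add_sub_cancel, hφeven, hφeven, hφodd,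
      pow_succ, pow_mul]
    convert schrodinger_odd_of_recurrence hP m using 3
    norm_num
end

section
/- Let V : ℕ → ℝ satisfy |V(m)| < d for all m ≥ m₀, where 0 < d < 1/2. Then any solution u of u(n+1) + u(n-1) + V(n)u(n) = (2 + d)u(n) has at most one sign change on {m₀, m₀ + 1, …}. (Equivalently: if u(n) > 0 and u(n+1) > 0 for some n ≥ m₀, then u(m) > 0 for all m ≥ n.) -/
private lemma pos_forever (V : ℕ → ℝ) (d : ℝ) (m₀ : ℕ) (hd : 0 < d)
    (hV : ∀ m : ℕ, m₀ ≤ m → |V m| < d) (u : ℕ → ℝ)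
    (hu : ∀ n : ℕ, 1 ≤ n → u (n+1) + u (n-1) + V n * u n = (2 + d) * u n)
    (n : ℕ) (hn : m₀ ≤ n) (h1 : 0 < u (n+1)) (h2 : u n ≤ u (n+1)) :
    ∀ k, 0 < u (n+1+k) ∧ u (n+k) ≤ u (n+1+k) := by
  intro k
  induction k with
  | zero => exact ⟨h1, h2⟩
  | succ k ih =>
    obtain ⟨hpos, hmono⟩ := ih
    have hrec := hu (n+1+k) (by omega)
    have hidx : n+1+k-1 = n+k := by omega
    rw [hidx] at hrec
    have hVd := (abs_lt.mp (hV (n+1+k) (by omega))).2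
    have key : 0 < (d - V (n+1+k)) * u (n+1+k) := mul_pos (by linarith) hpos
    have hnk : n + (k+1) = n+1+k := by omega
    rw [hnk]
    have hnk2 : n + 1 + (k+1) = n+1+k+1 := by omega
    rw [hnk2]
    constructor <;> nlinarith [hrec, key, hpos, hmono]

private lemma all_zero (V : ℕ → ℝ) (d : ℝ) (u : ℕ → ℝ)
    (hu : ∀ n : ℕ, 1 ≤ n → u (n+1) + u (n-1) + V n * u n = (2 + d) * u n)
    (a : ℕ) (h0 : u a = 0) (h1 : u (a+1) = 0) : ∀ m, u m = 0 := by
  have fwd : ∀ k, u (a+k) = 0 ∧ u (a+k+1) = 0 := by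
    intro k
    induction k with
    | zero => exact ⟨h0, h1⟩
    | succ k ih =>
      refine ⟨ih.2, ?_⟩
      have hrec := hu (a+k+1) (by omega)
      have hidx : a+k+1-1 = a+k := by omega
      rw [hidx, ih.1, ih.2] at hrec
      have : a + (k+1) + 1 = a + k + 1 + 1 := by omega
      rw [this]
      nlinarith [hrec]
  have bwd : ∀ i, u (a - i) = 0 ∧ u (a - i + 1) = 0 := by
    intro i
    induction i with
    | zero => exact ⟨h0, h1⟩
    | succ i ih =>
      by_cases h : a ≤ i
      · have e1 : a - (i+1) = a - i := by omega
        rw [e1]; exact ih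
      · have hlt : i < a := by omega
        have e2 : a - (i+1) + 1 = a - i := by omega
        refine ⟨?_, by rw [e2]; exact ih.1⟩
        have hrec := hu (a - i) (by omega)
        have hidx : a - i - 1 = a - (i+1) := by omega
        rw [hidx, ih.1, ih.2] at hrec
        nlinarith [hrec]
  intro m
  rcases le_or_gt m a with h | h
  · have e : a - (a - m) = m := by omega
    have := (bwd (a - m)).1
    rwa [e] at this
  · have e : a + (m - a) = m := by omega
    have := (fwd (m - a)).1
    rwa [e] at this

private lemma no_change_after (V : ℕ → ℝ) (d : ℝ) (m₀ : ℕ) (hd : 0 < d)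
    (hV : ∀ m : ℕ, m₀ ≤ m → |V m| < d) (w : ℕ → ℝ)
    (hw : ∀ n : ℕ, 1 ≤ n → w (n+1) + w (n-1) + V n * w n = (2 + d) * w n)
    (a : ℕ) (ha : m₀ ≤ a) (h1 : 0 < w (a+1)) (h2 : w a ≤ 0)
    (b : ℕ) (hab : a < b) :
    ¬(w b * w (b+1) < 0 ∨ w b = 0) := by
  have H := pos_forever V d m₀ hd hV w hw a ha h1 (le_trans h2 h1.le)
  have hb1 : 0 < w b := by
    have := (H (b - (a+1))).1
    have e : a + 1 + (b - (a+1)) = b := by omega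
    rwa [e] at this
  have hb2 : 0 < w (b+1) := by
    have := (H (b - a)).1
    have e : a + 1 + (b - a) = b + 1 := by omega
    rwa [e] at this
  rintro (h | h)
  · nlinarith
  · rw [h] at hb1; exact lt_irrefl 0 hb1

/-- If `|V(m)| < d` for `m ≥ m₀` with `0 < d < 1/2`, then any nontrivial solution of
`u(n+1) + u(n-1) + V(n)u(n) = (2+d)u(n)` has at most one sign change on `{m₀, m₀+1, …}`,
where a sign change occurs at `n` if `u(n)u(n+1) < 0` or `u(n) = 0`. -/
theorem stmt13 (V : ℕ → ℝ) (d : ℝ) (m₀ : ℕ) (hd : 0 < d) (hd' : d < 1/2)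
    (hV : ∀ m : ℕ, m₀ ≤ m → |V m| < d) (u : ℕ → ℝ)
    (hu : ∀ n : ℕ, 1 ≤ n → u (n+1) + u (n-1) + V n * u n = (2 + d) * u n)
    (hu0 : ∃ n : ℕ, u n ≠ 0) :
    {n : ℕ | m₀ ≤ n ∧ (u n * u (n+1) < 0 ∨ u n = 0)}.Subsingleton := by
  -- key: a sign change at `a` forbids a sign change at any `b > a`
  have key : ∀ a b : ℕ, a < b → m₀ ≤ a → (u a * u (a+1) < 0 ∨ u a = 0) →
      ¬(u b * u (b+1) < 0 ∨ u b = 0) := by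
    intro a b hab ha hsc
    -- u (a+1) ≠ 0
    have hne : u (a+1) ≠ 0 := by
      rcases hsc with h | h
      · intro h0; rw [h0, mul_zero] at h; exact lt_irrefl 0 h
      · intro h0
        obtain ⟨n, hn⟩ := hu0
        exact hn (all_zero V d u hu a h h0 n)
    rcases hne.lt_or_gt with hneg | hpos
    · -- use w = -u
      have hw : ∀ n : ℕ, 1 ≤ n →
          (-u (n+1)) + (-u (n-1)) + V n * (-u n) = (2 + d) * (-u n) := by
        intro n hn
        have := hu n hn
        ring_nf
        ring_nf at this
        linarith
      have h2 : -u a ≤ 0 := by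
        rcases hsc with h | h
        · nlinarith
        · rw [h]; simp
      have := no_change_after V d m₀ hd hV (fun n => -u n) hw a ha
        (by simpa using hneg) h2 b hab
      simp only [neg_mul_neg, neg_eq_zero] at this
      exact this
    · have h2 : u a ≤ 0 := by
        rcases hsc with h | h
        · nlinarith
        · exact le_of_eq h
      exact no_change_after V d m₀ hd hV u hu a ha hpos h2 b hab
  intro a ha b hb
  simp only [Set.mem_setOf_eq] at ha hb
  rcases lt_trichotomy a b with h | h | h
  · exact absurd hb.2 (key a b h ha.1 ha.2)
  · exact h
  · exact absurd ha.2 (key b a h hb.1 hb.2)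
end

section
/- Let W solve W_{n+1} = W_n + v_n [[−1, (−1)^{n+1}],[(−1)^n, 1]] W_n, set A_n = ((−1)^n/2)[[0,1],[−1,0]], and define U_n by W_n = (1 + v_n A_n) U_n (for n large so that 1 + v_n A_n is invertible). If v_n → 0, v_n² ∈ ℓ¹, and v_{n+1} − v_n ∈ ℓ¹, then U satisfies U_{n+1} = diag(1 − v_n, 1 + v_n) U_n + R_n U_n with ∑‖R_n‖ < ∞. -/
attribute [local instance] Matrix.normedAddCommGroup

/-- The remainder matrix. `a = v n`, `b = v (n+1)`, `t = (-1)^n`. -/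
noncomputable def Rmat (a b t : ℝ) : Matrix (Fin 2) (Fin 2) ℝ :=
  !![(a^2/2 + a*b/4 - a^2*b/4 - b^2/4 + a*b^2/4)/(1 + b^2/4),
     t*((b-a)/2 + (a*b - a^2)/2 + a^2*b/4)/(1 + b^2/4);
     t*((a-b)/2 + (a*b - a^2)/2 - a^2*b/4)/(1 + b^2/4),
     (a^2/2 + a*b/4 + a^2*b/4 - b^2/4 - a*b^2/4)/(1 + b^2/4)]

set_option maxHeartbeats 1600000 in
lemma Rmat_key (a b t : ℝ) (ht : t = 1 ∨ t = -1) :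
    ((1 : Matrix (Fin 2) (Fin 2) ℝ) + (b * (-t/2)) • !![(0:ℝ), 1; -1, 0])
      * (Matrix.diagonal ![1-a, 1+a] + Rmat a b t)
    = ((1 : Matrix (Fin 2) (Fin 2) ℝ) + a • !![(-1:ℝ), -t; t, 1])
      * ((1 : Matrix (Fin 2) (Fin 2) ℝ) + (a * (t/2)) • !![(0:ℝ), 1; -1, 0]) := by
  have hd : (1 + b^2/4 : ℝ) ≠ 0 := by positivity
  have hdiag : Matrix.diagonal ![1-a, 1+a] = !![1-a, 0; 0, 1+a] := by
    ext i j
    fin_cases i <;> fin_cases j <;> simp [Matrix.diagonal_apply]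
  rw [hdiag]
  rcases ht with rfl | rfl <;>
  · ext i j
    fin_cases i <;> fin_cases j <;>
    · simp [Rmat, Matrix.mul_apply, Fin.sum_univ_two, Matrix.one_apply,
        Matrix.diagonal]
      field_simp
      ring

set_option maxHeartbeats 1600000 in
lemma Rmat_norm_le (a b t C : ℝ) (hC : 1 ≤ C) (ha : |a| ≤ C) (hb : |b| ≤ C)
    (ht : |t| = 1) :
    ‖Rmat a b t‖ ≤ C * (a^2 + b^2 + |b - a|) := by
  have hC0 : (0:ℝ) < C := lt_of_lt_of_le one_pos hC
  have hg0 : 0 ≤ C * (a^2 + b^2 + |b - a|) := by positivity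
  have hd1 : (1:ℝ) ≤ 1 + b^2/4 := by nlinarith [sq_nonneg b]
  have ha' := abs_le.1 ha
  have hb' := abs_le.1 hb
  have he : |b - a| ≥ 0 := abs_nonneg _
  have he1 := le_abs_self (b - a)
  have he2 := neg_abs_le (b - a)
  have hab : |a * (b - a)| ≤ C * |b - a| := by
    rw [abs_mul]
    exact mul_le_mul_of_nonneg_right ha (abs_nonneg _)
  have hab' := abs_le.1 hab
  rw [Matrix.norm_le_iff hg0]
  intro i j
  have key : ∀ x : ℝ, |x| ≤ C * (a^2 + b^2 + |b - a|) →
      |x / (1 + b^2/4)| ≤ C * (a^2 + b^2 + |b - a|) := by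
    intro x hx
    rw [abs_div, abs_of_pos (by linarith : (0:ℝ) < 1 + b^2/4)]
    exact le_trans (div_le_self (abs_nonneg _) hd1) hx
  fin_cases i <;> fin_cases j <;>
    simp only [Rmat, Matrix.cons_val', Matrix.cons_val_zero, Matrix.cons_val_one,
      Matrix.head_cons, Matrix.empty_val', Matrix.cons_val_fin_one,
      Real.norm_eq_abs, Matrix.of_apply, Matrix.cons_val_one, Matrix.head_fin_const,
      Fin.isValue, Matrix.cons_val_zero, Fin.mk_one, Fin.mk_zero, Matrix.vecCons] <;>
    norm_num
  · apply key
    rw [abs_le]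
    constructor <;> nlinarith [sq_nonneg (a-b), sq_nonneg (a+b),
      mul_nonneg (by linarith : (0:ℝ) ≤ C - b) (sq_nonneg a),
      mul_nonneg (by linarith : (0:ℝ) ≤ C + b) (sq_nonneg a),
      mul_nonneg (by linarith : (0:ℝ) ≤ C - a) (sq_nonneg b),
      mul_nonneg (by linarith : (0:ℝ) ≤ C + a) (sq_nonneg b),
      mul_nonneg (by linarith : (0:ℝ) ≤ C - 1) he]
  · rw [mul_div_assoc, abs_mul, ht, one_mul]
    apply key
    rw [abs_le]
    constructor <;> nlinarith [hab'.1, hab'.2, he1, he2,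
      mul_nonneg (by linarith : (0:ℝ) ≤ C - b) (sq_nonneg a),
      mul_nonneg (by linarith : (0:ℝ) ≤ C + b) (sq_nonneg a),
      mul_nonneg (by linarith : (0:ℝ) ≤ C - 1) he, sq_nonneg b]
  · rw [mul_div_assoc, abs_mul, ht, one_mul]
    apply key
    rw [abs_le]
    constructor <;> nlinarith [hab'.1, hab'.2, he1, he2,
      mul_nonneg (by linarith : (0:ℝ) ≤ C - b) (sq_nonneg a),
      mul_nonneg (by linarith : (0:ℝ) ≤ C + b) (sq_nonneg a),
      mul_nonneg (by linarith : (0:ℝ) ≤ C - 1) he, sq_nonneg b]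
  · apply key
    rw [abs_le]
    constructor <;> nlinarith [sq_nonneg (a-b), sq_nonneg (a+b),
      mul_nonneg (by linarith : (0:ℝ) ≤ C - b) (sq_nonneg a),
      mul_nonneg (by linarith : (0:ℝ) ≤ C + b) (sq_nonneg a),
      mul_nonneg (by linarith : (0:ℝ) ≤ C - a) (sq_nonneg b),
      mul_nonneg (by linarith : (0:ℝ) ≤ C + a) (sq_nonneg b),
      mul_nonneg (by linarith : (0:ℝ) ≤ C - 1) he]

/-- If `W_{n+1} = W_n + v_n [[-1,(-1)^{n+1}],[(-1)^n,1]] W_n`,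
`A_n = ((-1)^n/2)[[0,1],[-1,0]]`, `W_n = (1 + v_n A_n) U_n`, and `v_n → 0`,
`∑ v_n² < ∞`, `∑ |v_{n+1} - v_n| < ∞`, then `U_{n+1} = diag(1-v_n, 1+v_n) U_n + R_n U_n`
with `∑ ‖R_n‖ < ∞`. -/
theorem stmt16 (v : ℕ → ℝ)
    (hv0 : Filter.Tendsto v Filter.atTop (nhds 0))
    (hv1 : Summable (fun n : ℕ => (v n)^2))
    (hv2 : Summable (fun n : ℕ => |v (n+1) - v n|))
    (W U : ℕ → Fin 2 → ℝ)
    (hW : ∀ n : ℕ, W (n+1)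
      = W n + v n • (!![(-1:ℝ), (-1)^(n+1); (-1)^n, 1]).mulVec (W n))
    (hWU : ∀ n : ℕ, W n
      = ((1 : Matrix (Fin 2) (Fin 2) ℝ)
          + (v n * ((-1)^n / 2)) • !![(0:ℝ), 1; -1, 0]).mulVec (U n)) :
    ∃ R : ℕ → Matrix (Fin 2) (Fin 2) ℝ,
      Summable (fun n : ℕ => ‖R n‖) ∧
      ∀ n : ℕ, U (n+1)
        = (Matrix.diagonal ![1 - v n, 1 + v n]).mulVec (U n) + (R n).mulVec (U n) := by
  -- a uniform bound on |v n|
  have habs : Filter.Tendsto (fun n => |v n|) Filter.atTop (nhds 0) := by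
    simpa using hv0.abs
  obtain ⟨C0, hC0⟩ := habs.bddAbove_range
  set C := max C0 1 with hC
  have hC1 : (1:ℝ) ≤ C := le_max_right _ _
  have hCv : ∀ n, |v n| ≤ C := fun n => le_trans (hC0 ⟨n, rfl⟩) (le_max_left _ _)
  refine ⟨fun n => Rmat (v n) (v (n+1)) ((-1)^n), ?_, ?_⟩
  · apply Summable.of_nonneg_of_le (fun n => norm_nonneg _)
      (fun n => Rmat_norm_le (v n) (v (n+1)) ((-1)^n) C hC1 (hCv n) (hCv (n+1))
        (by simp [abs_pow]))
    have h2 : Summable (fun n : ℕ => (v (n+1))^2) := (summable_nat_add_iff 1).2 hv1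
    exact ((hv1.add h2).add hv2).mul_left C
  · intro n
    have hid := Rmat_key (v n) (v (n+1)) ((-1)^n) (neg_one_pow_eq_or ℝ n)
    have e1 : (((1 : Matrix (Fin 2) (Fin 2) ℝ)
          + (v (n+1) * ((-1:ℝ)^(n+1) / 2)) • !![(0:ℝ), 1; -1, 0])).mulVec (U (n+1))
        = (((1 : Matrix (Fin 2) (Fin 2) ℝ) + v n • !![(-1:ℝ), (-1)^(n+1); (-1)^n, 1])
            * ((1 : Matrix (Fin 2) (Fin 2) ℝ)
                + (v n * ((-1:ℝ)^n / 2)) • !![(0:ℝ), 1; -1, 0])).mulVec (U n) := by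
      rw [← hWU (n+1), hW n, hWU n, Matrix.mulVec_mulVec]
      simp only [Matrix.add_mul, Matrix.one_mul, Matrix.smul_mul, Matrix.add_mulVec,
        Matrix.smul_mulVec]
    simp only [pow_succ, mul_neg_one] at e1 hid ⊢
    set c : ℝ := v (n+1) * (-(-1:ℝ)^n / 2) with hc
    have hA2 : (1 : Matrix (Fin 2) (Fin 2) ℝ) + c • !![(0:ℝ), 1; -1, 0]
        = !![1, c; -c, 1] := by
      ext i j
      fin_cases i <;> fin_cases j <;> simp [Matrix.one_apply]
    have hdet : IsUnit ((1 : Matrix (Fin 2) (Fin 2) ℝ)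
        + c • !![(0:ℝ), 1; -1, 0]).det := by
      rw [hA2, Matrix.det_fin_two_of]
      exact isUnit_iff_ne_zero.2 (by nlinarith [sq_nonneg c])
    set A' : Matrix (Fin 2) (Fin 2) ℝ := 1 + c • !![(0:ℝ), 1; -1, 0] with hA'
    have h3 : A'.mulVec (U (n+1))
        = A'.mulVec ((Matrix.diagonal ![1 - v n, 1 + v n]
            + Rmat (v n) (v (n+1)) ((-1)^n)).mulVec (U n)) := by
      rw [Matrix.mulVec_mulVec, hid]
      exact e1
    have h4 : U (n+1) = (Matrix.diagonal ![1 - v n, 1 + v n]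
        + Rmat (v n) (v (n+1)) ((-1)^n)).mulVec (U n) := by
      calc U (n+1) = (1 : Matrix (Fin 2) (Fin 2) ℝ).mulVec (U (n+1)) :=
            (Matrix.one_mulVec _).symm
        _ = (A'⁻¹ * A').mulVec (U (n+1)) := by rw [Matrix.nonsing_inv_mul _ hdet]
        _ = A'⁻¹.mulVec (A'.mulVec (U (n+1))) := (Matrix.mulVec_mulVec _ _ _).symm
        _ = A'⁻¹.mulVec (A'.mulVec ((Matrix.diagonal ![1 - v n, 1 + v n]
              + Rmat (v n) (v (n+1)) ((-1)^n)).mulVec (U n))) := by rw [h3]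
        _ = (A'⁻¹ * A').mulVec ((Matrix.diagonal ![1 - v n, 1 + v n]
              + Rmat (v n) (v (n+1)) ((-1)^n)).mulVec (U n)) :=
            Matrix.mulVec_mulVec _ _ _
        _ = _ := by rw [Matrix.nonsing_inv_mul _ hdet, Matrix.one_mulVec]
    rw [h4, Matrix.add_mulVec]
end
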